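/- Let x,y ∈ D and let d, d' be integers with 0 ≤ d ≤ d' and d ≤ ρ(x,y). Set z = x ↑^d y, y' = x ↑^{d'+1} y, and suppose that ρ(z_i, y'_i) ∈ {0,1} for every i∈V. Set x' = x ↓_d y'. Then the following four identities hold: (a) x ↑^d y' = x ↑^d y; (b) x ↓_d y' = x'; (c) x' ↑^{d'} y = y'; (d) x' ↓_{d'} y = x ↓_d y. -/

import Mathlib

/-- A finite rooted tree on vertex set `V`, encoded by its root, the parent function
(with `parent root = root`) and the depth function (distance to the root). -/
structure RTree (V : Type*) where
  root : V
  parent : V → V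
  depth : V → ℕ
  parent_root : parent root = root
  depth_root : depth root = 0
  depth_parent : ∀ v, v ≠ root → depth (parent v) + 1 = depth v

namespace RTree

variable {V : Type*} (T : RTree V)

/-- `a ⪯ b` : `a` is an ancestor of `b`, i.e. `a` lies on the path from `b` to the root. -/
def anc (a b : V) : Prop := ∃ k : ℕ, T.parent^[k] b = a

theorem iterate_depth_aux : ∀ (n : ℕ) (v : V), T.depth v = n → T.parent^[n] v = T.root := by
  intro n
  induction n with
  | zero =>
    intro v hn
    by_cases hv : v = T.root
    · simp [hv]
    · have := T.depth_parent v hv; omega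
  | succ n ih =>
    intro v hn
    have hv : v ≠ T.root := by
      intro h; rw [h, T.depth_root] at hn; omega
    have h := T.depth_parent v hv
    rw [Function.iterate_succ_apply]
    exact ih (T.parent v) (by omega)

theorem iterate_depth (v : V) : T.parent^[T.depth v] v = T.root :=
  T.iterate_depth_aux (T.depth v) v rfl

theorem anc_root (b : V) : T.anc T.root b := ⟨T.depth b, T.iterate_depth b⟩

theorem exists_lcaIndex (a b : V) : ∃ k : ℕ, T.anc (T.parent^[k] a) b :=
  ⟨T.depth a, by rw [T.iterate_depth a]; exact T.anc_root b⟩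

open Classical in
/-- The highest common ancestor of `a` and `b` : the deepest vertex that is an ancestor
of both `a` and `b` (i.e. the unique vertex of the path `P[a→b]` that is an ancestor of both). -/
noncomputable def lca (a b : V) : V := T.parent^[Nat.find (T.exists_lcaIndex a b)] a

/-- `ρ(a,b)` : the number of edges of the unique path `P[a→b]` from `a` to `b`. -/
noncomputable def dist (a b : V) : ℕ :=
  (T.depth a - T.depth (T.lca a b)) + (T.depth b - T.depth (T.lca a b))

open Classical in
/-- `P[a→b, d]` : the `d`-th vertex of the path from `a` to `b` (first the ascending part
from `a` to the highest common ancestor, then the descending part towards `b`);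
by convention it equals `b` for `d > ρ(a,b)`. -/
noncomputable def pathVertex (a b : V) (d : ℕ) : V :=
  if T.dist a b ≤ d then b
  else if d ≤ T.depth a - T.depth (T.lca a b) then T.parent^[d] a
  else T.parent^[T.dist a b - d] b

open Classical in
/-- `a ⊓ b` : the member of `{P[a→b,⌊ρ(a,b)/2⌋], P[a→b,⌈ρ(a,b)/2⌉]}` that is an
ancestor of the other one. -/
noncomputable def cap (a b : V) : V :=
  if T.anc (T.pathVertex a b (T.dist a b / 2)) (T.pathVertex a b ((T.dist a b + 1) / 2))
  then T.pathVertex a b (T.dist a b / 2)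
  else T.pathVertex a b ((T.dist a b + 1) / 2)

open Classical in
/-- `a ⊔ b` : the member of `{P[a→b,⌊ρ(a,b)/2⌋], P[a→b,⌈ρ(a,b)/2⌉]}` that is a
descendant of the other one. -/
noncomputable def cup (a b : V) : V :=
  if T.anc (T.pathVertex a b (T.dist a b / 2)) (T.pathVertex a b ((T.dist a b + 1) / 2))
  then T.pathVertex a b ((T.dist a b + 1) / 2)
  else T.pathVertex a b (T.dist a b / 2)

/-- `a ∧ b` : the highest common ancestor of `a` and `b`. -/
noncomputable def meet (a b : V) : V := T.lca a b

/-- `a ∨ b` : the unique vertex of `P[a→b]` with `ρ(a, a∨b) = ρ(a∧b, b)`. -/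
noncomputable def join (a b : V) : V :=
  T.pathVertex a b (T.depth b - T.depth (T.lca a b))

/-- `a ↑^d b = P[a→b,d] ∧ b`. -/
noncomputable def up (d : ℕ) (a b : V) : V := T.meet (T.pathVertex a b d) b

/-- `a ↓_d b = P[a→b, ρ(a ↑^d b, b)]`. -/
noncomputable def down (d : ℕ) (a b : V) : V :=
  T.pathVertex a b (T.dist (T.up d a b) b)

end RTree

section Product

variable {ι : Type*} {V : ι → Type*}

/-- `f` is strongly tree-submodular w.r.t. the trees `T i`:
`f(x) + f(y) ≥ f(x ⊓ y) + f(x ⊔ y)`, the operations acting componentwise. -/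
def StronglyTreeSubmodular (T : ∀ i, RTree (V i)) (f : (∀ i, V i) → ℝ) : Prop :=
  ∀ x y : ∀ i, V i,
    f (fun i => (T i).cap (x i) (y i)) + f (fun i => (T i).cup (x i) (y i)) ≤ f x + f y

/-- `INWARD(x) = { y ∈ NEIB(x) : y ⪯ x }`, where `NEIB(x) = {y : max_i ρ(x_i,y_i) ≤ 1}`. -/
def inward (T : ∀ i, RTree (V i)) (x : ∀ i, V i) : Set (∀ i, V i) :=
  {y | (∀ i, (T i).dist (x i) (y i) ≤ 1) ∧ ∀ i, (T i).anc (y i) (x i)}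

/-- `OUTWARD(x) = { y ∈ NEIB(x) : x ⪯ y }`. -/
def outward (T : ∀ i, RTree (V i)) (x : ∀ i, V i) : Set (∀ i, V i) :=
  {y | (∀ i, (T i).dist (x i) (y i) ≤ 1) ∧ ∀ i, (T i).anc (x i) (y i)}

end Product

/-!
`a ↑^k b` is the ancestor of `b` at distance `min (ρ(a,b) - k) ρ(a ∧ b, b)` from `b`, and every
prefix and every suffix of `P[a→b]` is again a tree path. Hence `y' = x ↑^(d'+1) y` lies on
`P[x→y]`, `x' = P[x→y, ρ(z,y')]` and `x' ↑^k y = x ↑^(ρ(z,y') + k) y`; the identities reduce to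
arithmetic on these distances, and `ρ(z,y') ≤ 1` is what makes `x' ↑^(d') y = y'`.
-/

namespace RTree

variable {V : Type*} (T : RTree V)

/-- `ρ(a, a ∧ b)`, the length of the ascending part of `P[a→b]`. -/
noncomputable def ascent (a b : V) : ℕ := T.depth a - T.depth (T.lca a b)

/-- `ρ(a ∧ b, b)`, the length of the descending part of `P[a→b]`. -/
noncomputable def descent (a b : V) : ℕ := T.depth b - T.depth (T.lca a b)

theorem dist_eq_ascent_add_descent (a b : V) : T.dist a b = T.ascent a b + T.descent a b := rfl

theorem descent_le_depth (a b : V) : T.descent a b ≤ T.depth b := Nat.sub_le _ _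

theorem pathVertex_eq (a b : V) (j : ℕ) : T.pathVertex a b j =
    if T.dist a b ≤ j then b
    else if j ≤ T.ascent a b then T.parent^[j] a
    else T.parent^[T.dist a b - j] b := rfl

variable {T} {a b c v : V} {j k k' t u : ℕ}

section Ancestors

theorem depth_iterate (k : ℕ) (v : V) : T.depth (T.parent^[k] v) = T.depth v - k := by
  induction k with
  | zero => rfl
  | succ k ih =>
    rw [Function.iterate_succ_apply']
    by_cases h : T.parent^[k] v = T.root
    · rw [h, T.parent_root, T.depth_root]
      rw [h, T.depth_root] at ih
      omega
    · have := T.depth_parent _ h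
      omega

theorem iterate_eq_root (v : V) (h : T.depth v ≤ k) : T.parent^[k] v = T.root := by
  rw [← Nat.sub_add_cancel h, Function.iterate_add_apply, T.iterate_depth,
    Function.iterate_fixed T.parent_root]

theorem anc_iterate (k : ℕ) (v : V) : T.anc (T.parent^[k] v) v := ⟨k, rfl⟩

theorem iterate_depth_sub_of_anc (h : T.anc c b) : T.parent^[T.depth b - T.depth c] b = c := by
  obtain ⟨j, rfl⟩ := h
  rw [depth_iterate]
  by_cases hj : j ≤ T.depth b
  · rw [Nat.sub_sub_self hj]
  · rw [T.iterate_eq_root (k := j) b (by omega)]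
    exact T.iterate_eq_root b (by omega)

end Ancestors

section LowestCommonAncestor

open Classical in
theorem lca_eq_iterate_of_minimal (hk : T.anc (T.parent^[k] a) b)
    (hmin : ∀ j < k, ¬ T.anc (T.parent^[j] a) b) : T.lca a b = T.parent^[k] a := by
  rw [lca, (Nat.find_eq_iff _).mpr ⟨hk, hmin⟩]

open Classical in
theorem ascent_eq_find (a b : V) : T.ascent a b = Nat.find (T.exists_lcaIndex a b) := by
  have hk : Nat.find (T.exists_lcaIndex a b) ≤ T.depth a :=
    Nat.find_min' _ (by rw [T.iterate_depth]; exact T.anc_root b)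
  rw [ascent, lca, depth_iterate]
  omega

open Classical in
theorem anc_lca_right (a b : V) : T.anc (T.lca a b) b := Nat.find_spec (T.exists_lcaIndex a b)

theorem lca_eq_iterate_ascent (a b : V) : T.lca a b = T.parent^[T.ascent a b] a := by
  rw [ascent_eq_find]
  rfl

open Classical in
theorem not_anc_iterate_of_lt_ascent (hj : j < T.ascent a b) : ¬ T.anc (T.parent^[j] a) b := by
  rw [ascent_eq_find] at hj
  exact Nat.find_min _ hj

theorem lca_eq_iterate_descent (a b : V) : T.lca a b = T.parent^[T.descent a b] b :=
  (iterate_depth_sub_of_anc (T.anc_lca_right a b)).symm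

theorem lca_eq_of_anc (h : T.anc c b) : T.lca c b = c :=
  lca_eq_iterate_of_minimal (k := 0) h (by omega)

theorem ascent_of_anc (h : T.anc c b) : T.ascent c b = 0 := by
  rw [ascent, lca_eq_of_anc h, Nat.sub_self]

theorem descent_of_anc (h : T.anc c b) : T.descent c b = T.depth b - T.depth c := by
  rw [descent, lca_eq_of_anc h]

theorem dist_iterate_self (hj : j ≤ T.depth v) : T.dist (T.parent^[j] v) v = j := by
  rw [dist_eq_ascent_add_descent, ascent_of_anc (anc_iterate j v),
    descent_of_anc (anc_iterate j v), depth_iterate]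
  omega

theorem lca_iterate_left (hu : u ≤ T.ascent a b) : T.lca (T.parent^[u] a) b = T.lca a b := by
  have key : T.lca (T.parent^[u] a) b = T.parent^[T.ascent a b - u] (T.parent^[u] a) := by
    apply lca_eq_iterate_of_minimal
    · rw [← Function.iterate_add_apply, Nat.sub_add_cancel hu, ← lca_eq_iterate_ascent]
      exact T.anc_lca_right a b
    · intro j hj
      rw [← Function.iterate_add_apply]
      exact not_anc_iterate_of_lt_ascent (by omega)
  rw [key, ← Function.iterate_add_apply, Nat.sub_add_cancel hu, ← lca_eq_iterate_ascent]

theorem lca_iterate_right (ht : t ≤ T.descent a b) : T.lca a (T.parent^[t] b) = T.lca a b := by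
  rw [lca_eq_iterate_ascent a b]
  apply lca_eq_iterate_of_minimal
  · refine ⟨T.descent a b - t, ?_⟩
    rw [← Function.iterate_add_apply, Nat.sub_add_cancel ht, ← lca_eq_iterate_descent,
      lca_eq_iterate_ascent]
  · rintro j hj ⟨m, hm⟩
    rw [← Function.iterate_add_apply] at hm
    exact not_anc_iterate_of_lt_ascent hj ⟨m + t, hm⟩

theorem ascent_iterate_left (hu : u ≤ T.ascent a b) :
    T.ascent (T.parent^[u] a) b = T.ascent a b - u := by
  have hlca := lca_iterate_left hu
  unfold ascent at hu ⊢
  rw [hlca, depth_iterate]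
  omega

theorem descent_iterate_left (hu : u ≤ T.ascent a b) :
    T.descent (T.parent^[u] a) b = T.descent a b := by
  rw [descent, descent, lca_iterate_left hu]

theorem ascent_iterate_right (ht : t ≤ T.descent a b) :
    T.ascent a (T.parent^[t] b) = T.ascent a b := by
  rw [ascent, ascent, lca_iterate_right ht]

theorem descent_iterate_right (ht : t ≤ T.descent a b) :
    T.descent a (T.parent^[t] b) = T.descent a b - t := by
  have hlca := lca_iterate_right ht
  unfold descent at ht ⊢
  rw [hlca, depth_iterate]
  omega

theorem dist_iterate_right (ht : t ≤ T.descent a b) :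
    T.dist a (T.parent^[t] b) = T.dist a b - t := by
  rw [dist_eq_ascent_add_descent, dist_eq_ascent_add_descent, ascent_iterate_right ht,
    descent_iterate_right ht]
  omega

end LowestCommonAncestor

section Paths

theorem pathVertex_of_le_ascent (hj : j ≤ T.ascent a b) :
    T.pathVertex a b j = T.parent^[j] a := by
  have hN := T.dist_eq_ascent_add_descent a b
  rw [pathVertex_eq, if_pos hj]
  split_ifs with hb
  · -- here `j = ρ(a,b)`, so `b = a ∧ b` is an ancestor of `a`
    rw [show j = T.ascent a b by omega, ← lca_eq_iterate_ascent, lca_eq_iterate_descent,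
      show T.descent a b = 0 by omega, Function.iterate_zero_apply]
  · rfl

theorem pathVertex_of_ascent_le (hj : T.ascent a b ≤ j) :
    T.pathVertex a b j = T.parent^[T.dist a b - j] b := by
  have hN := T.dist_eq_ascent_add_descent a b
  rw [pathVertex_eq]
  split_ifs with hb ha
  · rw [Nat.sub_eq_zero_of_le hb, Function.iterate_zero_apply]
  · rw [show j = T.ascent a b by omega, ← lca_eq_iterate_ascent, lca_eq_iterate_descent]
    congr 1
    omega
  · rfl

theorem pathVertex_iterate_right (ht : t ≤ T.descent a b) (hj : j ≤ T.dist a b - t) :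
    T.pathVertex a (T.parent^[t] b) j = T.pathVertex a b j := by
  have hN := T.dist_eq_ascent_add_descent a b
  rcases le_total j (T.ascent a b) with ha | ha
  · rw [pathVertex_of_le_ascent ha, pathVertex_of_le_ascent (by rwa [ascent_iterate_right ht])]
  · rw [pathVertex_of_ascent_le ha, pathVertex_of_ascent_le (by rwa [ascent_iterate_right ht]),
      dist_iterate_right ht, ← Function.iterate_add_apply]
    congr 1
    omega

theorem dist_pathVertex_left (a b : V) (u : ℕ) :
    T.dist (T.pathVertex a b u) b = T.dist a b - u := by
  have hN := T.dist_eq_ascent_add_descent a b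
  rcases le_total u (T.ascent a b) with hu | hu
  · rw [pathVertex_of_le_ascent hu, dist_eq_ascent_add_descent, ascent_iterate_left hu,
      descent_iterate_left hu]
    omega
  · rw [pathVertex_of_ascent_le hu,
      dist_iterate_self (by have := T.descent_le_depth a b; omega)]

theorem descent_pathVertex_left (a b : V) (u : ℕ) :
    T.descent (T.pathVertex a b u) b = min (T.descent a b) (T.dist a b - u) := by
  have hN := T.dist_eq_ascent_add_descent a b
  rcases le_total u (T.ascent a b) with hu | hu
  · rw [pathVertex_of_le_ascent hu, descent_iterate_left hu]
    omega
  · have := T.descent_le_depth a b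
    rw [pathVertex_of_ascent_le hu, descent_of_anc (anc_iterate _ b), depth_iterate]
    omega

theorem pathVertex_pathVertex_left (a b : V) (u j : ℕ) :
    T.pathVertex (T.pathVertex a b u) b j = T.pathVertex a b (u + j) := by
  have hN := T.dist_eq_ascent_add_descent a b
  rcases le_total u (T.ascent a b) with hu | hu
  · rw [pathVertex_of_le_ascent hu]
    rcases le_total j (T.ascent a b - u) with hj | hj
    · rw [pathVertex_of_le_ascent (by rwa [ascent_iterate_left hu]),
        pathVertex_of_le_ascent (by omega), add_comm, Function.iterate_add_apply]
    · rw [pathVertex_of_ascent_le (by rwa [ascent_iterate_left hu]),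
        pathVertex_of_ascent_le (by omega), dist_eq_ascent_add_descent, ascent_iterate_left hu,
        descent_iterate_left hu]
      congr 1
      omega
  · have hc := anc_iterate (T := T) (T.dist a b - u) b
    rw [pathVertex_of_ascent_le hu, pathVertex_of_ascent_le (by rw [ascent_of_anc hc]; omega),
      pathVertex_of_ascent_le (by omega),
      dist_iterate_self (by have := T.descent_le_depth a b; omega)]
    congr 1
    omega

end Paths

section UpDown

theorem up_eq_iterate (k : ℕ) (a b : V) :
    T.up k a b = T.parent^[min (T.dist a b - k) (T.descent a b)] b := by
  have hN := T.dist_eq_ascent_add_descent a b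
  rw [up, meet]
  rcases le_total k (T.ascent a b) with hk | hk
  · rw [pathVertex_of_le_ascent hk, lca_iterate_left hk, lca_eq_iterate_descent]
    congr 1
    omega
  · rw [pathVertex_of_ascent_le hk, lca_eq_of_anc (anc_iterate _ b)]
    congr 1
    omega

theorem dist_up_right (k : ℕ) (a b : V) :
    T.dist (T.up k a b) b = min (T.dist a b - k) (T.descent a b) := by
  rw [up_eq_iterate, dist_iterate_self (min_le_right _ _ |>.trans (T.descent_le_depth a b))]

theorem dist_up_up (h : k ≤ k') :
    T.dist (T.up k a b) (T.up k' a b) =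
      min (T.dist a b - k) (T.descent a b) - min (T.dist a b - k') (T.descent a b) := by
  have := T.descent_le_depth a b
  have hsplit : T.parent^[min (T.dist a b - k) (T.descent a b)] b =
      T.parent^[min (T.dist a b - k) (T.descent a b) - min (T.dist a b - k') (T.descent a b)]
        (T.parent^[min (T.dist a b - k') (T.descent a b)] b) := by
    rw [← Function.iterate_add_apply]
    congr 1
    omega
  rw [up_eq_iterate, up_eq_iterate, hsplit, dist_iterate_self (by rw [depth_iterate]; omega)]

theorem up_up_of_le (h : k ≤ k') : T.up k a (T.up k' a b) = T.up k a b := by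
  have ht : min (T.dist a b - k') (T.descent a b) ≤ T.descent a b := min_le_right _ _
  rw [up_eq_iterate k' a b, up_eq_iterate k a, dist_iterate_right ht, descent_iterate_right ht,
    ← Function.iterate_add_apply, up_eq_iterate k a b]
  congr 1
  omega

theorem down_up_of_le (h : k ≤ k') :
    T.down k a (T.up k' a b) = T.pathVertex a b (T.dist (T.up k a b) (T.up k' a b)) := by
  have ht : min (T.dist a b - k') (T.descent a b) ≤ T.descent a b := min_le_right _ _
  have hj : T.dist (T.up k a b) (T.up k' a b) ≤
      T.dist a b - min (T.dist a b - k') (T.descent a b) := by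
    rw [dist_up_up h]
    omega
  rw [down, up_up_of_le h]
  rw [up_eq_iterate k' a b] at hj ⊢
  exact pathVertex_iterate_right ht hj

theorem up_pathVertex_left (k : ℕ) (a b : V) (u : ℕ) :
    T.up k (T.pathVertex a b u) b = T.up (u + k) a b := by
  rw [up_eq_iterate, up_eq_iterate, dist_pathVertex_left, descent_pathVertex_left]
  congr 1
  omega

theorem down_pathVertex_left (k : ℕ) (a b : V) (u : ℕ) :
    T.down k (T.pathVertex a b u) b = T.pathVertex a b (u + T.dist (T.up (u + k) a b) b) := by
  rw [down, up_pathVertex_left, pathVertex_pathVertex_left]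

end UpDown

variable {d d' : ℕ}

theorem up_down_up_succ (h : d ≤ d') (hδ : T.dist (T.up d a b) (T.up (d' + 1) a b) ≤ 1) :
    T.up d' (T.down d a (T.up (d' + 1) a b)) b = T.up (d' + 1) a b := by
  rw [down_up_of_le (by omega), up_pathVertex_left]
  rw [dist_up_up (by omega)] at hδ ⊢
  rw [up_eq_iterate, up_eq_iterate]
  congr 1
  omega

theorem down_down_up_succ (h : d ≤ d') (hδ : T.dist (T.up d a b) (T.up (d' + 1) a b) ≤ 1) :
    T.down d' (T.down d a (T.up (d' + 1) a b)) b = T.down d a b := by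
  have hy' := up_down_up_succ h hδ
  rw [down_up_of_le (by omega), up_pathVertex_left] at hy'
  rw [down_up_of_le (by omega), down_pathVertex_left, hy', down, dist_up_up (by omega),
    dist_up_right, dist_up_right]
  congr 1
  omega

end RTree

theorem four_identities_up_down_general {ι : Type*} {V : ι → Type*}
    (T : ∀ i, RTree (V i)) (x y z y' x' : ∀ i, V i) (d d' : ℕ)
    (hdd' : d ≤ d')
    (hz : ∀ i, z i = (T i).up d (x i) (y i))
    (hy' : ∀ i, y' i = (T i).up (d' + 1) (x i) (y i))
    (hdelta : ∀ i, (T i).dist (z i) (y' i) ≤ 1)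
    (hx' : ∀ i, x' i = (T i).down d (x i) (y' i)) :
    (∀ i, (T i).up d (x i) (y' i) = (T i).up d (x i) (y i)) ∧
    (∀ i, (T i).down d (x i) (y' i) = x' i) ∧
    (∀ i, (T i).up d' (x' i) (y i) = y' i) ∧
    (∀ i, (T i).down d' (x' i) (y i) = (T i).down d (x i) (y i)) := by
  have hδ (i : ι) :
      (T i).dist ((T i).up d (x i) (y i)) ((T i).up (d' + 1) (x i) (y i)) ≤ 1 := by
    rw [← hz i, ← hy' i]
    exact hdelta i
  refine ⟨fun i => ?_, fun i => (hx' i).symm, fun i => ?_, fun i => ?_⟩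
  · rw [hy' i]
    exact RTree.up_up_of_le (by omega)
  · rw [hx' i, hy' i]
    exact RTree.up_down_up_succ hdd' (hδ i)
  · rw [hx' i, hy' i]
    exact RTree.down_down_up_succ hdd' (hδ i)

/-- Let `0 ≤ d ≤ d'` with `d ≤ ρ(x,y)`, set `z = x ↑^d y` and
`y' = x ↑^{d'+1} y`, and suppose `ρ(z_i, y'_i) ∈ {0,1}` for every `i`. Set
`x' = x ↓_d y'`. Then: (a) `x ↑^d y' = x ↑^d y`; (b) `x ↓_d y' = x'`;
(c) `x' ↑^{d'} y = y'`; (d) `x' ↓_{d'} y = x ↓_d y`. -/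
theorem four_identities_up_down {ι : Type*} [Fintype ι] {V : ι → Type*}
    [∀ i, Fintype (V i)] (T : ∀ i, RTree (V i)) (x y z y' x' : ∀ i, V i) (d d' : ℕ)
    (hdd' : d ≤ d')
    (hdist : d ≤ Finset.univ.sup fun i => (T i).dist (x i) (y i))
    (hz : ∀ i, z i = (T i).up d (x i) (y i))
    (hy' : ∀ i, y' i = (T i).up (d' + 1) (x i) (y i))
    (hdelta : ∀ i, (T i).dist (z i) (y' i) ≤ 1)
    (hx' : ∀ i, x' i = (T i).down d (x i) (y' i)) :
    (∀ i, (T i).up d (x i) (y' i) = (T i).up d (x i) (y i)) ∧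
    (∀ i, (T i).down d (x i) (y' i) = x' i) ∧
    (∀ i, (T i).up d' (x' i) (y i) = y' i) ∧
    (∀ i, (T i).down d' (x' i) (y i) = (T i).down d (x i) (y i)) :=
  four_identities_up_down_general T x y z y' x' d d' hdd' hz hy' hdelta hx'
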